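/- Let k be a field and g : ℝ → ℝ any function. For every (a,b,c) ∈ P, the k-module M_g(a,b,c) is spanned by the images of the structure maps M_g(t,t,g(t)) → M_g(a,b,c) over all t ∈ S(a,b,c). More precisely: for every connected component C of S(a,b,c) and every t ∈ C, the point (t,t,g(t)) lies in P and satisfies (t,t,g(t)) ⊑ (a,b,c), the space S(t,t,g(t)) is the single point {t} (so M_g(t,t,g(t)) ≅ k), and the structure map M_g(t,t,g(t)) → M_g(a,b,c) sends the basis element of the unique component {t} to the basis element corresponding to C. -/

import Mathlib

open CategoryTheory

noncomputable section

/-- The map induced on connected components by an inclusion of subspaces. -/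
def compMap {Y : Type} [TopologicalSpace Y] {A B : Set Y} (h : A ⊆ B) :
    ConnectedComponents A → ConnectedComponents B :=
  (continuous_inclusion h).connectedComponentsMap

lemma compMap_id {Y : Type} [TopologicalSpace Y] {A : Set Y} (h : A ⊆ A) :
    compMap h = id := by
  funext x
  obtain ⟨y, rfl⟩ := ConnectedComponents.surjective_coe x
  rfl

lemma compMap_comp {Y : Type} [TopologicalSpace Y] {A B C : Set Y}
    (hAB : A ⊆ B) (hBC : B ⊆ C) (hAC : A ⊆ C) :
    compMap hAC = compMap hBC ∘ compMap hAB := by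
  funext x
  obtain ⟨y, rfl⟩ := ConnectedComponents.surjective_coe x
  rfl

/-- The persistence module (valued in free `k`-modules on connected components)
associated to a monotone family of subspaces indexed by a poset: it assigns to `p`
the free `k`-module on the set of connected components of `A p`, and to each
relation `p ≤ q` the `k`-linear map sending the basis element of a connected
component of `A p` to the basis element of the connected component of `A q`
containing it. -/
def compFunctor (k : Type) [Field k] {α : Type} [Preorder α] {Y : Type} [TopologicalSpace Y]
    (A : α → Set Y) (mono : Monotone A) : α ⥤ ModuleCat k where
  obj p := ModuleCat.of k (ConnectedComponents (A p) →₀ k)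
  map {p q} h := ModuleCat.ofHom (Finsupp.lmapDomain k k (compMap (mono (leOfHom h))))
  map_id p := by
    apply ModuleCat.hom_ext
    show Finsupp.lmapDomain k k _ = _
    rw [compMap_id]; exact Finsupp.lmapDomain_id _ _
  map_comp {p q r} f g := by
    apply ModuleCat.hom_ext
    show Finsupp.lmapDomain k k _ = _
    rw [compMap_comp (mono (leOfHom f)) (mono (leOfHom g))]
    exact Finsupp.lmapDomain_comp _ _ _ _

/-- The sublevel set `S(a,b,c) = {t ∈ ℝ : a ≤ t ≤ b and g t ≤ c}`. -/
def Slev (g : ℝ → ℝ) (a b c : ℝ) : Set ℝ := {t : ℝ | a ≤ t ∧ t ≤ b ∧ g t ≤ c}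

/-- The indexing poset `P = {(a,b,c) ∈ ℝ³ : 0 ≤ a ≤ b ≤ 1}` with
`(a,b,c) ⊑ (a',b',c')` iff `a' ≤ a`, `b ≤ b'` and `c ≤ c'`. -/
def PP : Type := {p : ℝ × ℝ × ℝ // 0 ≤ p.1 ∧ p.1 ≤ p.2.1 ∧ p.2.1 ≤ 1}

namespace PP

instance : PartialOrder PP where
  le p q := q.1.1 ≤ p.1.1 ∧ p.1.2.1 ≤ q.1.2.1 ∧ p.1.2.2 ≤ q.1.2.2
  le_refl p := ⟨le_refl _, le_refl _, le_refl _⟩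
  le_trans p q r h h' := ⟨h'.1.trans h.1, h.2.1.trans h'.2.1, h.2.2.trans h'.2.2⟩
  le_antisymm p q h h' :=
    Subtype.ext (Prod.ext (le_antisymm h'.1 h.1)
      (Prod.ext (le_antisymm h.2.1 h'.2.1) (le_antisymm h.2.2 h'.2.2)))

/-- The coordinate `a` of a point of `P`. -/
def a (p : PP) : ℝ := p.1.1
/-- The coordinate `b` of a point of `P`. -/
def b (p : PP) : ℝ := p.1.2.1
/-- The coordinate `c` of a point of `P`. -/
def c (p : PP) : ℝ := p.1.2.2

lemma le_def {p q : PP} : p ≤ q ↔ q.a ≤ p.a ∧ p.b ≤ q.b ∧ p.c ≤ q.c := Iff.rfl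

end PP

lemma Slev_mono (g : ℝ → ℝ) : Monotone (fun p : PP => Slev g p.a p.b p.c) :=
  fun _ _ h _ ht => ⟨h.1.trans ht.1, ht.2.1.trans h.2.1, ht.2.2.trans h.2.2⟩

/-- The persistence module `M_g : P ⥤ ModuleCat k` of a function `g : ℝ → ℝ`:
it assigns to `(a,b,c) ∈ P` the free `k`-module on the set of connected components of
the sublevel set `S(a,b,c)`, and to each relation `(a,b,c) ⊑ (a',b',c')` the `k`-linear
map sending the basis element corresponding to a component `C` of `S(a,b,c)` to the basis
element corresponding to the unique component of `S(a',b',c')` containing `C`. -/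
def Mg (k : Type) [Field k] (g : ℝ → ℝ) : PP ⥤ ModuleCat k :=
  compFunctor k (fun p : PP => Slev g p.a p.b p.c) (Slev_mono g)

/-- For `t ∈ S(a,b,c)` with `(a,b,c) ∈ P`, the point `(t,t,g(t))` of `P`. -/
def ptP (g : ℝ → ℝ) (p : PP) (t : ℝ) (ht : t ∈ Slev g p.a p.b p.c) : PP :=
  ⟨(t, t, g t), p.2.1.trans ht.1, le_refl t, ht.2.1.trans p.2.2.2⟩

lemma ptP_le (g : ℝ → ℝ) (p : PP) (t : ℝ) (ht : t ∈ Slev g p.a p.b p.c) :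
    ptP g p t ht ≤ p :=
  ⟨ht.1, ht.2.1, ht.2.2⟩

lemma mem_Slev_ptP (g : ℝ → ℝ) (p : PP) (t : ℝ) (ht : t ∈ Slev g p.a p.b p.c) :
    t ∈ Slev g (ptP g p t ht).a (ptP g p t ht).b (ptP g p t ht).c :=
  ⟨le_refl t, le_refl t, le_refl (g t)⟩

section compFunctor

variable (k : Type) [Field k] {α : Type} [Preorder α] {Y : Type} [TopologicalSpace Y]
  {A : α → Set Y} (mono : Monotone A)

theorem compFunctor_map_single {p q : α} (f : p ⟶ q) (x : A p) (r : k) :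
    (compFunctor k A mono).map f (Finsupp.single (ConnectedComponents.mk x) r) =
      Finsupp.single (ConnectedComponents.mk (Set.inclusion (mono (leOfHom f)) x)) r :=
  Finsupp.mapDomain_single

theorem compFunctor_iSup_range_map_eq_top {q : α} (p : (y : Y) → y ∈ A q → α)
    (hp : ∀ y hy, p y hy ≤ q) (hmem : ∀ y hy, y ∈ A (p y hy)) :
    ⨆ (y : Y) (hy : y ∈ A q),
      LinearMap.range ((compFunctor k A mono).map (homOfLE (hp y hy))).hom = ⊤ := by
  refine eq_top_iff.mpr
    ((Finsupp.iSup_lsingle_range (M := k)).symm.le.trans (iSup_le fun C => ?_))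
  obtain ⟨⟨y, hy⟩, rfl⟩ := ConnectedComponents.surjective_coe C
  refine le_iSup₂_of_le y hy ?_
  rintro _ ⟨r, rfl⟩
  exact ⟨Finsupp.single (ConnectedComponents.mk ⟨y, hmem y hy⟩) r,
    compFunctor_map_single k mono _ _ r⟩

end compFunctor

theorem Slev_self_self (g : ℝ → ℝ) (t : ℝ) : Slev g t t (g t) = {t} :=
  Set.eq_singleton_iff_unique_mem.mpr
    ⟨⟨le_rfl, le_rfl, le_rfl⟩, fun _ hs => le_antisymm hs.2.1 hs.1⟩

/-- **`M_g` is pointwise spanned by the images of the structure maps from the points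
`(t,t,g(t))`.** For every `(a,b,c) ∈ P`: for every connected component `C` of `S(a,b,c)`
and every `t ∈ C`, the point `(t,t,g(t))` lies in `P` and satisfies
`(t,t,g(t)) ⊑ (a,b,c)` (this is `ptP_le` above), the space `S(t,t,g(t))` is the single
point `{t}` (so `M_g(t,t,g(t)) ≅ k`), and the structure map
`M_g(t,t,g(t)) → M_g(a,b,c)` sends the basis element of the unique component `{t}` to the
basis element corresponding to `C`.  Moreover `M_g(a,b,c)` is spanned by the images of
these structure maps over all `t ∈ S(a,b,c)`. -/
theorem Mg_spanned_by_points (k : Type) [Field k] (g : ℝ → ℝ) (p : PP) :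
    (∀ (t : ℝ) (ht : t ∈ Slev g p.a p.b p.c),
      Slev g (ptP g p t ht).a (ptP g p t ht).b (ptP g p t ht).c = {t} ∧
      ∀ C : _root_.ConnectedComponents (Slev g p.a p.b p.c),
        C = ConnectedComponents.mk ⟨t, ht⟩ →
        (Mg k g).map (homOfLE (ptP_le g p t ht))
            (Finsupp.single (ConnectedComponents.mk ⟨t, mem_Slev_ptP g p t ht⟩) (1 : k))
          = Finsupp.single C (1 : k)) ∧
    (⨆ (t : ℝ) (ht : t ∈ Slev g p.a p.b p.c),
      LinearMap.range (((Mg k g).map (homOfLE (ptP_le g p t ht))).hom :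
        (Mg k g).obj (ptP g p t ht) →ₗ[k] (Mg k g).obj p)) = ⊤ :=
  ⟨fun t ht => ⟨Slev_self_self g t, by
      rintro C rfl
      exact compFunctor_map_single k (Slev_mono g) _ _ 1⟩,
    compFunctor_iSup_range_map_eq_top k (Slev_mono g) (ptP g p) (ptP_le g p) (mem_Slev_ptP g p)⟩

end
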